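/- arXiv:1807.05501 — 4 statements merged into one kernel-verified Lean document; each statement's English description precedes it below -/
import Mathlib

section
/- Let R be a commutative ring and let f ∈ R[x] be a polynomial of degree one whose leading coefficient is a unit of R. Then every element A of the localization R[x]_f := R[x][f^{-1}] can be written uniquely as a finite sum A = \sum_{i\in\mathbb{Z}} a_i f^i with coefficients a_i ∈ R (all but finitely many equal to zero). -/
open Polynomial LaurentPolynomial

/-! Since the leading coefficient of `f` is a unit, `X ↦ f` is an affine change of variables,
i.e. an `R`-algebra automorphism of `R[X]`. It carries the powers of `X` onto the powers of `f`
and so induces an isomorphism `R[X]_X ≃ R[X]_f`. Now `R[X]_X` is the Laurent polynomial ring,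
whose elements are uniquely `∑ aᵢ Tⁱ`, and the isomorphism sends `T` to `f`. -/

theorem Polynomial.exists_algEquiv_apply_X_eq_of_degree_eq_one {R : Type*} [CommRing R]
    {f : R[X]} (hdeg : f.degree = 1) (hlead : IsUnit f.leadingCoeff) :
    ∃ ψ : R[X] ≃ₐ[R] R[X], ψ X = f := by
  have hcoeff : f.coeff 1 = f.leadingCoeff := by
    rw [leadingCoeff, natDegree_eq_of_degree_eq_some hdeg]
    rfl
  have : Invertible (f.coeff 1) := hcoeff ▸ hlead.invertible
  refine ⟨algEquivCMulXAddC (f.coeff 1) (f.coeff 0), ?_⟩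
  simpa using (eq_X_add_C_of_degree_le_one hdeg.le).symm

namespace LaurentPolynomial

theorem eval₂_ofCoeff {R S : Type*} [CommSemiring R] [CommSemiring S] (g : R →+* S) (x : Sˣ)
    (a : ℤ →₀ R) :
    eval₂ g x (.ofCoeff a) = a.sum fun n r => g r * ↑(x ^ n) := by
  conv_lhs => rw [← AddMonoidAlgebra.sum_coeff_single (.ofCoeff a)]
  simp [map_finsuppSum, single_eq_C_mul_T]

theorem eval₂_bijective_of_isLocalization {R S : Type*} [CommSemiring R] [CommSemiring S]
    [Algebra R S] [Algebra R[X] S] [IsScalarTower R R[X] S] {f : R[X]} [IsLocalization.Away f S]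
    (ψ : R[X] ≃ₐ[R] R[X]) (hψ : ψ X = f) (u : Sˣ) (hu : (u : S) = algebraMap R[X] S f) :
    Function.Bijective (eval₂ (algebraMap R S) u) := by
  have hpowers : (Submonoid.powers X).map ψ.toRingEquiv.toMonoidHom = Submonoid.powers f := by
    rw [Submonoid.map_powers]
    exact congrArg Submonoid.powers hψ
  let e := IsLocalization.ringEquivOfRingEquiv R[T;T⁻¹] S ψ.toRingEquiv hpowers
  have he (p : R[X]) : e (algebraMap R[X] R[T;T⁻¹] p) = algebraMap R[X] S (ψ p) :=
    IsLocalization.ringEquivOfRingEquiv_eq hpowers p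
  suffices eval₂ (algebraMap R S) u = (e : R[T;T⁻¹] →+* S) from this ▸ e.bijective
  refine IsLocalization.ringHom_ext (Submonoid.powers (X : R[X]))
    (Polynomial.ringHom_ext (fun r => ?_) ?_)
  all_goals rw [RingHom.comp_apply, RingHom.comp_apply, RingHom.coe_coe, he,
    algebraMap_eq_toLaurent, eval₂_toLaurent]
  · rw [Polynomial.eval₂_C, ← Polynomial.algebraMap_eq, ψ.commutes,
      ← IsScalarTower.algebraMap_apply]
  · rw [Polynomial.eval₂_X, hψ, hu]

end LaurentPolynomial

/-- **Unique `f`-power expansion in `R[x][f⁻¹]` for `f` of degree one.**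
Let `R` be a commutative ring and `f ∈ R[x]` a polynomial of degree one whose leading
coefficient is a unit of `R`.  Let `u` be the unit of the localization
`R[x]_f = R[x][f⁻¹]` given by the image of `f`.  Then every element `A` of `R[x]_f`
can be written uniquely as a finite sum `A = ∑ᵢ aᵢ fⁱ` (`i ∈ ℤ`) with coefficients
`aᵢ ∈ R`, all but finitely many equal to zero. -/
theorem unique_f_power_expansion_degree_one
    (R : Type*) [CommRing R] (f : Polynomial R)
    (hdeg : f.degree = 1) (hlead : IsUnit f.leadingCoeff)
    (u : (Localization.Away f)ˣ)
    (hu : (u : Localization.Away f) = algebraMap (Polynomial R) (Localization.Away f) f)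
    (A : Localization.Away f) :
    ∃! a : ℤ →₀ R,
      A = a.sum fun i c =>
        algebraMap R (Localization.Away f) c *
          ((u ^ i : (Localization.Away f)ˣ) : Localization.Away f) := by
  obtain ⟨ψ, hψ⟩ := exists_algEquiv_apply_X_eq_of_degree_eq_one hdeg hlead
  have hbij := (eval₂_bijective_of_isLocalization ψ hψ u hu).comp
    (AddMonoidAlgebra.coeffEquiv (R := R) (M := ℤ)).symm.bijective
  simpa [eval₂_ofCoeff, eq_comm] using hbij.existsUnique A
end

section
/- Let K be a field of characteristic zero and let f ∈ K[x] be a polynomial of degree one with f(0) ≠ 0, so that K[x][f^{-1}] embeds into the formal power series ring K[[x]]. Fix n ≥ 0 and elements A_{lp} ∈ K[x][f^{-1}] for 0 ≤ l ≤ n and p ≥ 0, only finitely many of which are nonzero. Write each A ∈ K[x][f^{-1}] uniquely as A = \sum_{i\in\mathbb{Z}} a_i f^i with a_i ∈ K and let Ord(A) be the largest i with a_i ≠ 0 (Ord(0) = -∞). Assume Ord(A_{l0}) ≤ -2 for all l, and Ord(A_{lp}) ≤ p-1 for all l and all p ≥ 1. Then for any sequence (R_m)_{m≥0} of elements of K[[x]]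 with R_0 = 1 satisfying, for every m ≥ 1, dR_m/dx = \sum_{l=0}^{n} \sum_{p≥0} A_{lp} · (d/dx)^p R_{m-1-l} (with the convention R_j = 0 for j < 0), every R_m lies in the subring K[x][f^{-1}] of K[[x]]. -/
/-!
Let `V j` be the `K`-span of the powers `f ^ i` with `i ≤ j`. Because `f'` is a nonzero constant,
`(f ^ i)' = i f' f ^ (i - 1)`: differentiation maps `V j` into `V (j - 1)` and, since it kills
constants, `V 0` into `V (-2)`; moreover `V i * V j ⊆ V (i + j)`. The order bounds on the `A l p`
therefore put the right-hand side of the recursion in `V (-2)` once the earlier `R` lie in `V 0`.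
In characteristic zero every `f ^ i` with `i ≤ -2` is the derivative of
`f ^ (i + 1) / ((i + 1) f')`, so `R m` lies in `V (-1) + K ⊆ V 0 ⊆ K[f⁻¹]`.
-/

open PowerSeries

section

variable (K : Type*) {S : Type*} [CommSemiring K] [CommRing S] [Algebra K S]

/-- For `u = f` these are the `A` with `Ord(A) ≤ j`. -/
def zpowSpan (u : Sˣ) (j : ℤ) : Submodule K S :=
  Submodule.span K {g : S | ∃ i : ℤ, i ≤ j ∧ g = ((u ^ i : Sˣ) : S)}

variable {K} (u : Sˣ)

theorem zpow_mem_zpowSpan {i j : ℤ} (h : i ≤ j) : ((u ^ i : Sˣ) : S) ∈ zpowSpan K u j :=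
  Submodule.subset_span ⟨i, h, rfl⟩

theorem zpowSpan_mono {i j : ℤ} (h : i ≤ j) : zpowSpan K u i ≤ zpowSpan K u j :=
  Submodule.span_mono fun _ ⟨k, hk, e⟩ => ⟨k, hk.trans h, e⟩

theorem zpowSpan_mul_le (i j : ℤ) : zpowSpan K u i * zpowSpan K u j ≤ zpowSpan K u (i + j) := by
  rw [zpowSpan, zpowSpan, Submodule.span_mul_span, Submodule.span_le]
  rintro _ ⟨_, ⟨k, hk, rfl⟩, _, ⟨l, hl, rfl⟩, rfl⟩
  change ((u ^ k : Sˣ) : S) * ((u ^ l : Sˣ) : S) ∈ _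
  rw [← Units.val_mul, ← zpow_add]
  exact zpow_mem_zpowSpan u (add_le_add hk hl)

theorem mul_mem_zpowSpan {a c : S} {i j : ℤ} (ha : a ∈ zpowSpan K u i)
    (hc : c ∈ zpowSpan K u j) : a * c ∈ zpowSpan K u (i + j) :=
  zpowSpan_mul_le u i j (Submodule.mul_mem_mul ha hc)

theorem algebraMap_mem_zpowSpan_zero (c : K) : algebraMap K S c ∈ zpowSpan K u 0 := by
  rw [Algebra.algebraMap_eq_smul_one, ← Units.val_one, ← zpow_zero u]
  exact Submodule.smul_mem _ c (zpow_mem_zpowSpan u le_rfl)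

theorem zpowSpan_zero_le_adjoin :
    zpowSpan K u 0 ≤ Subalgebra.toSubmodule (Algebra.adjoin K {((u⁻¹ : Sˣ) : S)}) := by
  rw [zpowSpan, Submodule.span_le]
  rintro _ ⟨i, hi, rfl⟩
  obtain ⟨k, rfl⟩ := Int.exists_eq_neg_ofNat hi
  rw [zpow_neg, zpow_natCast, ← inv_pow, Units.val_pow_eq_pow_val]
  exact pow_mem (Algebra.self_mem_adjoin_singleton K _) k

end

namespace Derivation

variable {R A M : Type*} [CommSemiring R] [CommRing A] [AddCommGroup M] [Algebra R A]
  [Module A M] [Module R M] (D : Derivation R A M)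

theorem leibniz_units_zpow (u : Aˣ) (n : ℤ) :
    D ↑(u ^ n) = n • (↑(u ^ (n - 1)) : A) • D u := by
  -- `n ↦ u⁻ⁿ • D uⁿ` is additive, hence equal to `n ↦ n • u⁻¹ • D u`
  let φ : ℤ →+ M :=
    { toFun := fun n => (↑(u ^ (-n)) : A) • D ↑(u ^ n)
      map_zero' := by simp
      map_add' := fun m n => by
        rw [zpow_add, Units.val_mul, leibniz, smul_add, smul_smul, smul_smul, ← Units.val_mul,
          ← Units.val_mul, ← zpow_add, ← zpow_add, add_comm]
        congr 4 <;> ring }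
  have hφ : φ n = n • φ 1 := by rw [← map_zsmul, zsmul_one, Int.cast_id]
  calc D ↑(u ^ n) = (↑(u ^ n) : A) • φ n := by
        rw [AddMonoidHom.coe_mk, ZeroHom.coe_mk, smul_smul, ← Units.val_mul, ← zpow_add,
          add_neg_cancel, zpow_zero, Units.val_one, one_smul]
    _ = n • (↑(u ^ (n - 1)) : A) • D u := by
        rw [hφ, smul_comm, AddMonoidHom.coe_mk, ZeroHom.coe_mk, smul_smul, ← Units.val_mul,
          ← zpow_add, zpow_one, ← sub_eq_add_neg]

end Derivation

section

variable {K S : Type*} [Field K] [CommRing S] [Algebra K S] {D : Derivation K S S} {u : Sˣ} {b : K}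

theorem Derivation.map_zpow_of_map_eq_algebraMap (hu : D u = algebraMap K S b) (i : ℤ) :
    D ↑(u ^ i) = ((i : K) * b) • ((u ^ (i - 1) : Sˣ) : S) := by
  rw [D.leibniz_units_zpow, hu, smul_eq_mul, ← Algebra.commutes, ← Algebra.smul_def,
    ← Int.cast_smul_eq_zsmul K, smul_smul]

theorem map_zpowSpan_le (hu : D u = algebraMap K S b) (j : ℤ) :
    (zpowSpan K u j).map (D : S →ₗ[K] S) ≤ zpowSpan K u (j - 1) := by
  rw [zpowSpan, Submodule.map_span_le]
  rintro _ ⟨i, hi, rfl⟩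
  rw [Derivation.coeFn_coe, D.map_zpow_of_map_eq_algebraMap hu]
  exact Submodule.smul_mem _ _ (zpow_mem_zpowSpan u (by omega))

theorem map_mem_zpowSpan_sub_one (hu : D u = algebraMap K S b) {a : S} {j : ℤ}
    (ha : a ∈ zpowSpan K u j) : D a ∈ zpowSpan K u (j - 1) :=
  map_zpowSpan_le hu j (Submodule.mem_map_of_mem ha)

theorem iterate_map_mem_zpowSpan_sub (hu : D u = algebraMap K S b) {a : S} {j : ℤ}
    (ha : a ∈ zpowSpan K u j) (p : ℕ) : D^[p] a ∈ zpowSpan K u (j - p) := by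
  induction p with
  | zero => simpa using ha
  | succ p ih =>
    rw [Function.iterate_succ_apply', Nat.cast_succ, ← sub_sub]
    exact map_mem_zpowSpan_sub_one hu ih

theorem map_zpowSpan_zero_le (hu : D u = algebraMap K S b) :
    (zpowSpan K u 0).map (D : S →ₗ[K] S) ≤ zpowSpan K u (-2) := by
  rw [zpowSpan, Submodule.map_span_le]
  rintro _ ⟨i, hi, rfl⟩
  obtain rfl | hi := hi.eq_or_lt
  · simp
  · have h := map_mem_zpowSpan_sub_one hu (zpow_mem_zpowSpan u (show i ≤ -1 by omega))
    rwa [show (-1 : ℤ) - 1 = -2 by norm_num] at h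

theorem iterate_succ_map_mem_zpowSpan_of_mem_zero (hu : D u = algebraMap K S b) {a : S}
    (ha : a ∈ zpowSpan K u 0) (q : ℕ) : D^[q + 1] a ∈ zpowSpan K u (-q - 2) := by
  rw [Function.iterate_succ_apply, sub_eq_add_neg, add_comm, ← sub_eq_add_neg]
  exact iterate_map_mem_zpowSpan_sub hu
    (map_zpowSpan_zero_le hu (Submodule.mem_map_of_mem ha)) q

theorem zpowSpan_neg_two_le_map [CharZero K] (hu : D u = algebraMap K S b) (hb : b ≠ 0) :
    zpowSpan K u (-2) ≤ (zpowSpan K u (-1)).map (D : S →ₗ[K] S) := by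
  rw [zpowSpan, Submodule.span_le]
  rintro _ ⟨i, hi, rfl⟩
  have hc : ((i + 1 : ℤ) : K) * b ≠ 0 := mul_ne_zero (Int.cast_ne_zero.2 (by omega)) hb
  refine ⟨(((i + 1 : ℤ) : K) * b)⁻¹ • ((u ^ (i + 1) : Sˣ) : S),
    Submodule.smul_mem _ _ (zpow_mem_zpowSpan u (by omega)), ?_⟩
  rw [Derivation.coeFn_coe, D.map_smul, D.map_zpow_of_map_eq_algebraMap hu, smul_smul,
    inv_mul_cancel₀ hc, one_smul, add_sub_cancel_right]

theorem mem_zpowSpan_zero_of_map_mem [CharZero K] (hu : D u = algebraMap K S b) (hb : b ≠ 0)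
    (hker : ∀ a, D a = 0 → a ∈ Set.range (algebraMap K S)) {a : S}
    (ha : D a ∈ zpowSpan K u (-2)) : a ∈ zpowSpan K u 0 := by
  obtain ⟨g, hg, hga⟩ := zpowSpan_neg_two_le_map hu hb ha
  obtain ⟨c, hc⟩ := hker (a - g) (by rw [map_sub, ← hga, Derivation.coeFn_coe, sub_self])
  rw [← sub_add_cancel a g, ← hc]
  exact add_mem (algebraMap_mem_zpowSpan_zero u c) (zpowSpan_mono u (by norm_num) hg)

theorem mem_zpowSpan_zero_of_recursion [CharZero K] (hu : D u = algebraMap K S b) (hb : b ≠ 0)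
    (hker : ∀ a, D a = 0 → a ∈ Set.range (algebraMap K S)) {n N : ℕ} {A : ℕ → ℕ → S}
    (hA0 : ∀ l ≤ n, A l 0 ∈ zpowSpan K u (-2))
    (hAp : ∀ l ≤ n, ∀ p : ℕ, 1 ≤ p → A l p ∈ zpowSpan K u (p - 1))
    {R : ℤ → S} (hRneg : ∀ j < 0, R j = 0) (hR0 : R 0 = 1)
    (hrec : ∀ m : ℤ, 1 ≤ m → D (R m) =
      ∑ l ∈ Finset.range (n + 1), ∑ p ∈ Finset.range N, A l p * D^[p] (R (m - 1 - l)))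
    (m : ℤ) : R m ∈ zpowSpan K u 0 := by
  induction m using Int.strongRec (m := 0) with
  | lt m hm => rw [hRneg m hm]; exact zero_mem _
  | ge m hm ih =>
    obtain rfl | hm := hm.eq_or_lt
    · rw [hR0, ← map_one (algebraMap K S)]
      exact algebraMap_mem_zpowSpan_zero u 1
    refine mem_zpowSpan_zero_of_map_mem hu hb hker ?_
    rw [hrec m hm]
    refine Submodule.sum_mem _ fun l hl => Submodule.sum_mem _ fun p _ => ?_
    have hl : l ≤ n := Nat.lt_succ_iff.mp (Finset.mem_range.mp hl)
    have hR : R (m - 1 - l) ∈ zpowSpan K u 0 := ih _ (by omega)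
    cases p with
    | zero => simpa using mul_mem_zpowSpan u (hA0 l hl) hR
    | succ q =>
      have h := mul_mem_zpowSpan u (hAp l hl (q + 1) q.succ_pos)
        (iterate_succ_map_mem_zpowSpan_of_mem_zero hu hR q)
      rwa [show ((q + 1 : ℕ) : ℤ) - 1 + (-q - 2) = -2 by push_cast; ring] at h

end

namespace PowerSeries

variable {R : Type*}

theorem mem_range_algebraMap_of_derivative_eq_zero [CommRing R] [IsAddTorsionFree R] (g : R⟦X⟧)
    (hg : d⁄dX R g = 0) : g ∈ Set.range (algebraMap R R⟦X⟧) :=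
  ⟨constantCoeff g, derivative.ext (by rw [hg, algebraMap_eq, derivative_C]) (by simp)⟩

theorem derivative_coe_of_degree_eq_one [CommRing R] {f : Polynomial R} (hf : f.degree = 1) :
    d⁄dX R (f : R⟦X⟧) = C (f.coeff 1) := by
  rw [derivative_coe, Polynomial.eq_X_add_C_of_degree_le_one hf.le]
  simp

end PowerSeries

theorem admissible_degree_one_general
    (K : Type*) [Field K] [CharZero K]
    (f : Polynomial K) (hdeg : f.degree = 1)
    (u : K⟦X⟧ˣ) (hu : (u : K⟦X⟧) = (f : K⟦X⟧))
    (n N : ℕ) (A : ℕ → ℕ → K⟦X⟧)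
    (hA0 : ∀ l ≤ n, A l 0 ∈ Submodule.span K
      {g : K⟦X⟧ | ∃ j : ℤ, j ≤ -2 ∧ g = ((u ^ j : K⟦X⟧ˣ) : K⟦X⟧)})
    (hAp : ∀ l ≤ n, ∀ p : ℕ, 1 ≤ p → A l p ∈ Submodule.span K
      {g : K⟦X⟧ | ∃ j : ℤ, j ≤ (p : ℤ) - 1 ∧ g = ((u ^ j : K⟦X⟧ˣ) : K⟦X⟧)})
    (R : ℤ → K⟦X⟧)
    (hRneg : ∀ j : ℤ, j < 0 → R j = 0)
    (hR0 : R 0 = 1)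
    (hrec : ∀ m : ℤ, 1 ≤ m →
      PowerSeries.derivative K (R m) =
        ∑ l ∈ Finset.range (n + 1), ∑ p ∈ Finset.range N,
          A l p * (⇑(PowerSeries.derivative K))^[p] (R (m - 1 - (l : ℤ)))) :
    ∀ m : ℤ, R m ∈
      Algebra.adjoin K {PowerSeries.X, ((u⁻¹ : K⟦X⟧ˣ) : K⟦X⟧)} := by
  have hdu : d⁄dX K (u : K⟦X⟧) = algebraMap K K⟦X⟧ (f.coeff 1) :=
    hu ▸ derivative_coe_of_degree_eq_one hdeg
  intro m
  have hR : R m ∈ zpowSpan K u 0 :=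
    mem_zpowSpan_zero_of_recursion hdu (Polynomial.coeff_ne_zero_of_eq_degree hdeg)
      mem_range_algebraMap_of_derivative_eq_zero hA0 hAp hRneg hR0 hrec m
  exact Algebra.adjoin_mono (Set.subset_insert _ _) (zpowSpan_zero_le_adjoin u hR)

/-- **Admissibility lemma for a degree-one polynomial `f`.**
Let `K` be a field of characteristic zero and `f ∈ K[x]` of degree one with `f(0) ≠ 0`, so
that `f` becomes a unit `u` of `K[[x]]` and `K[x][f⁻¹]` embeds into `K[[x]]`.  Fix `n ≥ 0`
and elements `A l p ∈ K[x][f⁻¹]` for `0 ≤ l ≤ n`, `p ≥ 0`, vanishing for `p ≥ N`.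
The order conditions `Ord(A l 0) ≤ -2` and `Ord(A l p) ≤ p - 1` for `p ≥ 1` (with `Ord`
the largest exponent in the unique expansion `A = ∑ᵢ aᵢ fⁱ`) are expressed by membership
in the `K`-span of the corresponding integer powers of `f`.  Then for any sequence
`(R m)` in `K[[x]]` with `R 0 = 1`, `R j = 0` for `j < 0`, satisfying for all `m ≥ 1`
`dR_m/dx = ∑_{l=0}^{n} ∑_{p} A l p · (d/dx)^p R_{m-1-l}`, every `R m` lies in the
subring `K[x][f⁻¹]` of `K[[x]]`. -/
theorem admissible_degree_one
    (K : Type*) [Field K] [CharZero K]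
    (f : Polynomial K) (hdeg : f.degree = 1) (hf0 : Polynomial.eval 0 f ≠ 0)
    (u : K⟦X⟧ˣ) (hu : (u : K⟦X⟧) = (f : K⟦X⟧))
    (n N : ℕ) (A : ℕ → ℕ → K⟦X⟧)
    (hAfin : ∀ l p, N ≤ p → A l p = 0)
    (hA0 : ∀ l ≤ n, A l 0 ∈ Submodule.span K
      {g : K⟦X⟧ | ∃ j : ℤ, j ≤ -2 ∧ g = ((u ^ j : K⟦X⟧ˣ) : K⟦X⟧)})
    (hAp : ∀ l ≤ n, ∀ p : ℕ, 1 ≤ p → A l p ∈ Submodule.span K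
      {g : K⟦X⟧ | ∃ j : ℤ, j ≤ (p : ℤ) - 1 ∧ g = ((u ^ j : K⟦X⟧ˣ) : K⟦X⟧)})
    (R : ℤ → K⟦X⟧)
    (hRneg : ∀ j : ℤ, j < 0 → R j = 0)
    (hR0 : R 0 = 1)
    (hrec : ∀ m : ℤ, 1 ≤ m →
      PowerSeries.derivative K (R m) =
        ∑ l ∈ Finset.range (n + 1), ∑ p ∈ Finset.range N,
          A l p * (⇑(PowerSeries.derivative K))^[p] (R (m - 1 - (l : ℤ)))) :
    ∀ m : ℤ, R m ∈
      Algebra.adjoin K {PowerSeries.X, ((u⁻¹ : K⟦X⟧ˣ) : K⟦X⟧)} :=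
  admissible_degree_one_general K f hdeg u hu n N A hA0 hAp R hRneg hR0 hrec
end

section
/- Fix n ≥ 1 and let F = \mathbb{C}(\lambda_0,…,\lambda_n,z) be the field of rational functions in n+2 variables. For i ∈ {0,…,n} define the restricted I-function J_i ∈ F[[q]] by J_i = \sum_{d≥0} q^d · [\prod_{k=0}^{(n+1)d-1} (-(n+1)\lambda_i - kz)] / [\prod_{j=0}^{n} \prod_{k=1}^{d} (\lambda_i - \lambda_j + kz)]. Let D = q·d/dq be the derivation of F[[q]] and let M be the F-linear operator M = \lambda_i + zD on F[[q]]. Then J_i satisfies the Picard–Fuchs equation ( \prod_{j=0}^{n} (M - \lambda_j) - q·\prod_{k=0}^{n} (-(n+1)M - kz) ) J_i = 0, where the operators are composed and q·P denotes multiplication by q after applying P. -/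
open PowerSeries

noncomputable section

/-- The field `F = ℂ(λ₀, …, λₙ, z)` of rational functions in `n + 2` variables. -/
abbrev PFField (n : ℕ) : Type := FractionRing (MvPolynomial (Fin (n + 2)) ℂ)

/-- The equivariant weight `λⱼ ∈ F`, the image of the `j`-th variable. -/
def pfLam (n : ℕ) (j : Fin (n + 1)) : PFField n :=
  algebraMap (MvPolynomial (Fin (n + 2)) ℂ) (PFField n) (MvPolynomial.X j.castSucc)

/-- The equivariant variable `z ∈ F`, the image of the last variable. -/
def pfZ (n : ℕ) : PFField n :=
  algebraMap (MvPolynomial (Fin (n + 2)) ℂ) (PFField n) (MvPolynomial.X (Fin.last (n + 1)))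

/-- The restricted `I`-function
`Jᵢ = ∑_{d ≥ 0} q^d · ∏_{k=0}^{(n+1)d-1} (-(n+1)λᵢ - kz) /
  ∏_{j=0}^{n} ∏_{k=1}^{d} (λᵢ - λⱼ + kz) ∈ F[[q]]`. -/
def pfJ (n : ℕ) (i : Fin (n + 1)) : PowerSeries (PFField n) :=
  PowerSeries.mk fun d =>
    (∏ k ∈ Finset.range ((n + 1) * d),
        (-((n + 1 : PFField n) * pfLam n i) - ((k : ℕ) : PFField n) * pfZ n)) /
    (∏ j : Fin (n + 1), ∏ k ∈ Finset.Icc 1 d,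
        (pfLam n i - pfLam n j + ((k : ℕ) : PFField n) * pfZ n))

/-- The derivation `D = q · d/dq` on `F[[q]]`. -/
def pfD (n : ℕ) (ψ : PowerSeries (PFField n)) : PowerSeries (PFField n) :=
  PowerSeries.X * PowerSeries.derivative (PFField n) ψ

/-- The operator `M = λᵢ + z·D` on `F[[q]]`. -/
def pfM (n : ℕ) (i : Fin (n + 1)) (ψ : PowerSeries (PFField n)) : PowerSeries (PFField n) :=
  PowerSeries.C (R := PFField n) (pfLam n i) * ψ + PowerSeries.C (R := PFField n) (pfZ n) * pfD n ψ

/-!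
Every operator in the equation acts diagonally on monomials, `M q^d = (λᵢ + d z) q^d`, so the
equation is a statement about the coefficients `a_d` of `Jᵢ`. In degree `0` the factor `M - λᵢ`
annihilates `a_0`; in degree `d + 1` it becomes the first-order recurrence
`a_{d+1} ∏ⱼ (λᵢ - λⱼ + (d+1) z) = a_d ∏ₖ (-(n+1)(λᵢ + d z) - k z)`, which is exactly the ratio of
consecutive terms in the hypergeometric definition of `Jᵢ`.
-/

section DiagonalOperators

variable {R : Type*} [CommSemiring R]

theorem PowerSeries.coeff_X_mul_derivative (ψ : R⟦X⟧) (d : ℕ) :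
    coeff d (X * derivative R ψ) = d * coeff d ψ := by
  cases d with
  | zero => simp
  | succ d =>
    rw [coeff_succ_X_mul, coeff_derivative]
    push_cast
    ring

theorem PowerSeries.coeff_foldr_comp_ofFn {m : ℕ} (L : Fin m → R⟦X⟧ → R⟦X⟧) (g : Fin m → ℕ → R)
    (hL : ∀ j d ψ, coeff d (L j ψ) = g j d * coeff d ψ) (ψ : R⟦X⟧) (d : ℕ) :
    coeff d ((List.ofFn L).foldr (· ∘ ·) id ψ) = (∏ j, g j d) * coeff d ψ := by
  induction m with
  | zero => simp
  | succ m ih =>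
    rw [List.ofFn_succ, List.foldr_cons, Function.comp_apply, hL,
      ih (fun j => L j.succ) (fun j => g j.succ) (fun j => hL j.succ), Fin.prod_univ_succ, mul_assoc]

end DiagonalOperators

theorem coeff_pfM (n : ℕ) (i : Fin (n + 1)) (d : ℕ) (ψ : PowerSeries (PFField n)) :
    coeff d (pfM n i ψ) = (pfLam n i + d * pfZ n) * coeff d ψ := by
  rw [pfM, pfD, map_add, coeff_C_mul, coeff_C_mul, coeff_X_mul_derivative]
  ring

theorem pfLam_sub_pfLam_add_natCast_mul_pfZ_ne_zero (n : ℕ) (i j : Fin (n + 1)) {k : ℕ}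
    (hk : k ≠ 0) : pfLam n i - pfLam n j + (k : PFField n) * pfZ n ≠ 0 := by
  have hmap : pfLam n i - pfLam n j + (k : PFField n) * pfZ n =
      algebraMap (MvPolynomial (Fin (n + 2)) ℂ) (PFField n)
        (MvPolynomial.X i.castSucc - MvPolynomial.X j.castSucc +
          (k : MvPolynomial (Fin (n + 2)) ℂ) * MvPolynomial.X (Fin.last (n + 1))) := by
    simp [pfLam, pfZ]
  rw [hmap, Ne, IsFractionRing.to_map_eq_zero_iff]
  -- evaluate at `λ = 0`, `z = 1`
  intro h
  have := congrArg (MvPolynomial.eval fun v => if v = Fin.last (n + 1) then (1 : ℂ) else 0) h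
  simp [(Fin.castSucc_lt_last i).ne, (Fin.castSucc_lt_last j).ne, hk] at this

theorem coeff_pfJ_succ_mul (n : ℕ) (i : Fin (n + 1)) (d : ℕ) :
    coeff (d + 1) (pfJ n i) * ∏ j, (pfLam n i + (d + 1 : ℕ) * pfZ n - pfLam n j) =
      coeff d (pfJ n i) * ∏ k : Fin (n + 1), (-(n + 1) * (pfLam n i + d * pfZ n) - k * pfZ n) := by
  have hnum : ∏ k ∈ Finset.range ((n + 1) * (d + 1)),
        (-((n + 1 : PFField n) * pfLam n i) - (k : PFField n) * pfZ n) =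
      (∏ k ∈ Finset.range ((n + 1) * d),
        (-((n + 1 : PFField n) * pfLam n i) - (k : PFField n) * pfZ n)) *
        ∏ k : Fin (n + 1), (-(n + 1) * (pfLam n i + d * pfZ n) - k * pfZ n) := by
    rw [Nat.mul_succ, Finset.prod_range_add, Finset.prod_range (n := n + 1)]
    congr 1
    refine Finset.prod_congr rfl fun k _ => ?_
    push_cast
    ring
  have hden : ∏ j, ∏ k ∈ Finset.Icc 1 (d + 1), (pfLam n i - pfLam n j + (k : PFField n) * pfZ n) =
      (∏ j, ∏ k ∈ Finset.Icc 1 d, (pfLam n i - pfLam n j + (k : PFField n) * pfZ n)) *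
        ∏ j, (pfLam n i + (d + 1 : ℕ) * pfZ n - pfLam n j) := by
    rw [← Finset.prod_mul_distrib]
    refine Finset.prod_congr rfl fun j _ => ?_
    rw [Finset.prod_Icc_succ_top (M := PFField n) (by omega)]
    ring
  have hstep_ne : ∏ j, (pfLam n i + (d + 1 : ℕ) * pfZ n - pfLam n j) ≠ 0 :=
    Finset.prod_ne_zero_iff.2 fun j _ => by
      simpa only [add_sub_right_comm] using
        pfLam_sub_pfLam_add_natCast_mul_pfZ_ne_zero n i j d.succ_ne_zero
  rw [pfJ, coeff_mk, coeff_mk, hnum, hden, div_mul_eq_mul_div, mul_div_mul_right _ _ hstep_ne,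
    mul_div_right_comm]

theorem picard_fuchs_restricted_I_function_general (n : ℕ) (i : Fin (n + 1)) :
    ((List.ofFn fun j : Fin (n + 1) =>
        fun ψ : PowerSeries (PFField n) =>
          pfM n i ψ - PowerSeries.C (R := PFField n) (pfLam n j) * ψ).foldr (· ∘ ·) id) (pfJ n i)
    - PowerSeries.X *
      (((List.ofFn fun k : Fin (n + 1) =>
          fun ψ : PowerSeries (PFField n) =>
            PowerSeries.C (R := PFField n) (-(n + 1 : PFField n)) * pfM n i ψ -
              PowerSeries.C (R := PFField n) (((k : ℕ) : PFField n) * pfZ n) * ψ).foldr (· ∘ ·) id)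
        (pfJ n i)) = 0 := by
  rw [sub_eq_zero]
  ext d
  rw [coeff_foldr_comp_ofFn _ (fun j d => pfLam n i + d * pfZ n - pfLam n j)
    fun j d ψ => by rw [map_sub, coeff_pfM, coeff_C_mul]; ring]
  cases d with
  | zero =>
    rw [coeff_zero_X_mul]
    exact mul_eq_zero_of_left (Finset.prod_eq_zero (Finset.mem_univ i) (by simp)) _
  | succ d =>
    rw [coeff_succ_X_mul, coeff_foldr_comp_ofFn _
      (fun k d => -(n + 1) * (pfLam n i + d * pfZ n) - k * pfZ n)
      fun k d ψ => by rw [map_sub, coeff_C_mul, coeff_pfM, coeff_C_mul]; ring,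
      mul_comm, coeff_pfJ_succ_mul, mul_comm]

/-- **Picard–Fuchs equation for the restricted equivariant `I`-function of local `ℙⁿ`.**
For `n ≥ 1` and `i ∈ {0, …, n}`, the series `Jᵢ ∈ F[[q]]` satisfies
`(∏_{j=0}^{n} (M - λⱼ) - q · ∏_{k=0}^{n} (-(n+1)M - kz)) Jᵢ = 0`,
where `M = λᵢ + z·q·d/dq`, the operators are composed, and `q·P` denotes
multiplication by `q` after applying the operator `P`. -/
theorem picard_fuchs_restricted_I_function (n : ℕ) (hn : 1 ≤ n) (i : Fin (n + 1)) :
    ((List.ofFn fun j : Fin (n + 1) =>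
        fun ψ : PowerSeries (PFField n) =>
          pfM n i ψ - PowerSeries.C (R := PFField n) (pfLam n j) * ψ).foldr (· ∘ ·) id) (pfJ n i)
    - PowerSeries.X *
      (((List.ofFn fun k : Fin (n + 1) =>
          fun ψ : PowerSeries (PFField n) =>
            PowerSeries.C (R := PFField n) (-(n + 1 : PFField n)) * pfM n i ψ -
              PowerSeries.C (R := PFField n) (((k : ℕ) : PFField n) * pfZ n) * ψ).foldr (· ∘ ·) id)
        (pfJ n i)) = 0 :=
  picard_fuchs_restricted_I_function_general n i
end
end

section
/- Let K be a field of characteristic zero, let \lambda_0, \lambda_1 ∈ K be nonzero with \lambda_0 ≠ \lambda_1 and s_1 := \lambda_0 + \lambda_1 ≠ 0, and set s_2 = \lambda_0\lambda_1, f(x) = s_1 x - 2 s_2. Fix i ∈ {0,1} and define the rational functions A_{00}(x) = ( -s_1^2 s_2^2 + (-s_1^3 s_2 + 8 s_1 s_2^2) x + (2 s_1^4 - 9 s_1^2 s_2) x^2 ) / ( 4 (x s_1 - 2 s_2)^4 ), A_{01}(x) = ( 2 s_1 s_2^2 + (-s_1^2 s_2 - 8 s_2^2) x + (-s_1^3 +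 10 s_1 s_2) x^2 - s_1^2 x^3 ) / ( 2 (x s_1 - 2 s_2)^3 ), A_{02}(x) = ( s_2^2 - 2 s_1 s_2 x + (s_1^2 + s_2) x^2 - s_1 x^3 ) / ( (x s_1 - 2 s_2)^2 ). Since f(\lambda_i) = \lambda_i(\lambda_i - \lambda_{1-i}) ≠ 0, the ring K[x][f^{-1}] embeds into the ring K[[x - \lambda_i]] of formal power series at x = \lambda_i. Then for any sequence (\Phi_p)_{p≥0} in K[[x - \lambda_i]] with \Phi_0 = 1 satisfying, for all p ≥ 1, d\Phi_p/dx = A_{00}\Phi_{p-1} + A_{01} d\Phi_{p-1}/dx + A_{02} d^2\Phi_{p-1}/dx^2, every \Phi_p lies in the subring K[x][(s_1 x - 2 s_2)^{-1}] of K[[x - \lambda_i]]. -/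
/-!
Put `v = f⁻¹`. Since `f' = s₁` is constant, `v' = -s₁v²`; hence differentiation maps `K[v]` into
`v²K[v]` and `v^(k+1)K[v]` into `v^(k+2)K[v]`, and conversely, in characteristic zero, every element
of `v²K[v]` is the derivative of an element of `K[v]`, because `(v^(n+1))' = -(n+1)s₁v^(n+2)`.
As `xv = s₁⁻¹(1 + 2s₂v)` lies in `K[v]`, the order conditions read `A₀₀ ∈ v²K[v]`, `A₀₁ ∈ K[v]` and
`vA₀₂ ∈ K[v]`. So if `Φ_p ∈ K[v]`, the right-hand side of the recursion lies in `v²K[v]`, and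
`Φ_{p+1}`, being one of its antiderivatives, lies in `K[v]` as well.
-/

open PowerSeries
open scoped Algebra

noncomputable section

/-- The element `x = λᵢ + X` of `K[[X]] = K[[x - λᵢ]]`, i.e. the coordinate `x`
viewed in the ring of formal power series at `x = λᵢ`. -/
def xAt (K : Type*) [Field K] (c : K) : K⟦X⟧ := PowerSeries.X + PowerSeries.C (R := K) c

/-- `A₀₀(x) = (-s₁²s₂² + (-s₁³s₂ + 8s₁s₂²)x + (2s₁⁴ - 9s₁²s₂)x²) / (4(xs₁ - 2s₂)⁴)`,
viewed in `K[[x - λᵢ]]` (with `c = λᵢ`). -/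
def A00P1 (K : Type*) [Field K] (c s1 s2 : K) : K⟦X⟧ :=
  (PowerSeries.C (R := K) (-(s1 ^ 2 * s2 ^ 2)) +
    PowerSeries.C (R := K) (-(s1 ^ 3 * s2) + 8 * s1 * s2 ^ 2) * xAt K c +
    PowerSeries.C (R := K) (2 * s1 ^ 4 - 9 * s1 ^ 2 * s2) * xAt K c ^ 2) *
  (PowerSeries.C (R := K) 4 * (xAt K c * PowerSeries.C (R := K) s1 - PowerSeries.C (R := K) (2 * s2)) ^ 4)⁻¹

/-- `A₀₁(x) = (2s₁s₂² + (-s₁²s₂ - 8s₂²)x + (-s₁³ + 10s₁s₂)x² - s₁²x³) / (2(xs₁ - 2s₂)³)`. -/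
def A01P1 (K : Type*) [Field K] (c s1 s2 : K) : K⟦X⟧ :=
  (PowerSeries.C (R := K) (2 * s1 * s2 ^ 2) +
    PowerSeries.C (R := K) (-(s1 ^ 2 * s2) - 8 * s2 ^ 2) * xAt K c +
    PowerSeries.C (R := K) (-s1 ^ 3 + 10 * s1 * s2) * xAt K c ^ 2 -
    PowerSeries.C (R := K) (s1 ^ 2) * xAt K c ^ 3) *
  (PowerSeries.C (R := K) 2 * (xAt K c * PowerSeries.C (R := K) s1 - PowerSeries.C (R := K) (2 * s2)) ^ 3)⁻¹

/-- `A₀₂(x) = (s₂² - 2s₁s₂x + (s₁² + s₂)x² - s₁x³) / ((xs₁ - 2s₂)²)`. -/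
def A02P1 (K : Type*) [Field K] (c s1 s2 : K) : K⟦X⟧ :=
  (PowerSeries.C (R := K) (s2 ^ 2) -
    PowerSeries.C (R := K) (2 * (s1 * s2)) * xAt K c +
    PowerSeries.C (R := K) (s1 ^ 2 + s2) * xAt K c ^ 2 -
    PowerSeries.C (R := K) s1 * xAt K c ^ 3) *
  ((xAt K c * PowerSeries.C (R := K) s1 - PowerSeries.C (R := K) (2 * s2)) ^ 2)⁻¹

section Derivation

variable {K A : Type*} [Field K] [CommRing A] [Algebra K A] (D : Derivation K A A) {v : A} {c : K}

theorem Derivation.exists_map_eq_sq_mul (hv : D v = -(c • v ^ 2)) {a : A} (ha : a ∈ K[v]) :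
    ∃ b ∈ K[v], D a = v ^ 2 * b := by
  induction ha using Algebra.adjoin_induction with
  | mem x hx =>
    rw [Set.mem_singleton_iff.1 hx, hv, Algebra.smul_def]
    exact ⟨-algebraMap K A c, neg_mem (Subalgebra.algebraMap_mem _ c), by ring⟩
  | algebraMap r => exact ⟨0, zero_mem _, by simp⟩
  | add x y _ _ hx hy =>
    obtain ⟨b, hb, hDx⟩ := hx
    obtain ⟨b', hb', hDy⟩ := hy
    exact ⟨b + b', add_mem hb hb', by rw [map_add, hDx, hDy, mul_add]⟩
  | mul x y hx' hy' hx hy =>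
    obtain ⟨b, hb, hDx⟩ := hx
    obtain ⟨b', hb', hDy⟩ := hy
    refine ⟨x * b' + y * b, add_mem (mul_mem hx' hb') (mul_mem hy' hb), ?_⟩
    rw [Derivation.leibniz, hDx, hDy, smul_eq_mul, smul_eq_mul]
    ring

theorem Derivation.map_pow_succ_eq (hv : D v = -(c • v ^ 2)) (n : ℕ) :
    D (v ^ (n + 1)) = -(((n + 1 : K) * c) • v ^ (n + 2)) := by
  rw [D.leibniz_pow, hv, Nat.add_sub_cancel]
  simp only [nsmul_eq_mul, smul_eq_mul]
  simp only [Algebra.smul_def, map_mul, map_add, map_one]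
  push_cast
  ring

theorem Derivation.exists_map_pow_mul_eq (hv : D v = -(c • v ^ 2)) (k : ℕ) {a : A}
    (ha : a ∈ K[v]) : ∃ b ∈ K[v], D (v ^ (k + 1) * a) = v ^ (k + 2) * b := by
  obtain ⟨b, hb, hDa⟩ := D.exists_map_eq_sq_mul hv ha
  refine ⟨v * b - ((k + 1 : K) * c) • a,
    sub_mem (mul_mem (Algebra.self_mem_adjoin_singleton K v) hb) (Subalgebra.smul_mem _ ha _), ?_⟩
  rw [D.leibniz, hDa, D.map_pow_succ_eq hv]
  simp only [smul_eq_mul, Algebra.smul_def]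
  ring

theorem Derivation.exists_mem_adjoin_map_eq [CharZero K] (hc : c ≠ 0) (hv : D v = -(c • v ^ 2))
    {b : A} (hb : b ∈ K[v]) : ∃ a ∈ K[v], D a = v ^ 2 * b := by
  rw [Algebra.adjoin_singleton_eq_range_aeval] at hb
  obtain ⟨q, rfl⟩ := (AlgHom.mem_range _).1 hb
  induction q using Polynomial.induction_on' with
  | add p q hp hq =>
    obtain ⟨a, ha, hDa⟩ := hp (AlgHom.mem_range_self _ _)
    obtain ⟨a', ha', hDa'⟩ := hq (AlgHom.mem_range_self _ _)
    exact ⟨a + a', add_mem ha ha', by rw [map_add, hDa, hDa', map_add, mul_add]⟩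
  | monomial n r =>
    refine ⟨(-(r / ((n + 1) * c))) • v ^ (n + 1),
      Subalgebra.smul_mem _ (pow_mem (Algebra.self_mem_adjoin_singleton K v) _) _, ?_⟩
    have hn : ((n : K) + 1) * c ≠ 0 := mul_ne_zero (Nat.cast_add_one_ne_zero n) hc
    rw [D.map_smul, D.map_pow_succ_eq hv, Polynomial.aeval_monomial, smul_neg, smul_smul,
      ← neg_smul, show v ^ 2 * (algebraMap K A r * v ^ n) = r • v ^ (n + 2) by
        rw [Algebra.smul_def]; ring]
    congr 1
    field_simp

end Derivation

protected theorem PowerSeries.inv_pow {K : Type*} [Field K] (φ : K⟦X⟧) (n : ℕ) : (φ ^ n)⁻¹ = φ⁻¹ ^ n := by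
  induction n with
  | zero => simp
  | succ n ih => rw [pow_succ, PowerSeries.mul_inv_rev, ih, pow_succ']

theorem PowerSeries.mem_of_derivative_eq {K : Type*} [Field K] [CharZero K]
    {S : Subalgebra K K⟦X⟧} {f g : K⟦X⟧} (hg : g ∈ S) (h : d⁄dX K f = d⁄dX K g) : f ∈ S := by
  have hfg : f = g + C (constantCoeff f - constantCoeff g) :=
    derivative.ext (by simp [h]) (by simp)
  rw [hfg]
  exact add_mem hg (S.algebraMap_mem _)

theorem PowerSeries.mem_adjoin_of_admissible {K : Type*} [Field K] [CharZero K] {v : K⟦X⟧} {c : K}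
    (hc : c ≠ 0) (hv : d⁄dX K v = -(c • v ^ 2)) {A₀ A₁ A₂ : K⟦X⟧}
    (hA₀ : ∃ a ∈ K[v], A₀ = v ^ 2 * a) (hA₁ : A₁ ∈ K[v]) (hA₂ : v * A₂ ∈ K[v])
    {Φ : ℕ → K⟦X⟧} (hΦ₀ : Φ 0 ∈ K[v])
    (hrec : ∀ p, d⁄dX K (Φ (p + 1)) =
      A₀ * Φ p + A₁ * d⁄dX K (Φ p) + A₂ * d⁄dX K (d⁄dX K (Φ p))) (p : ℕ) :
    Φ p ∈ K[v] := by
  obtain ⟨a, ha, rfl⟩ := hA₀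
  induction p with
  | zero => exact hΦ₀
  | succ p ih =>
    obtain ⟨b, hb, hD⟩ := (d⁄dX K).exists_map_eq_sq_mul hv ih
    obtain ⟨e, he, hDD⟩ := (d⁄dX K).exists_map_pow_mul_eq hv 1 hb
    have hrhs : v ^ 2 * a * Φ p + A₁ * d⁄dX K (Φ p) + A₂ * d⁄dX K (d⁄dX K (Φ p)) =
        v ^ 2 * (a * Φ p + A₁ * b + v * A₂ * e) := by
      rw [hD, hDD]
      ring
    obtain ⟨g, hg, hDg⟩ := (d⁄dX K).exists_mem_adjoin_map_eq hc hv
      (add_mem (add_mem (mul_mem ha ih) (mul_mem hA₁ hb)) (mul_mem hA₂ he))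
    exact mem_of_derivative_eq hg (by rw [hrec, hrhs, hDg])

section LocalP1

variable {K : Type*} [Field K] {c s1 s2 : K}

variable (K) in
def fAt (c s1 s2 : K) : K⟦X⟧ := C s1 * xAt K c - C (2 * s2)

theorem constantCoeff_fAt : constantCoeff (fAt K c s1 s2) = s1 * c - 2 * s2 := by
  simp [fAt, xAt]

theorem derivative_inv_fAt : d⁄dX K (fAt K c s1 s2)⁻¹ = -(s1 • (fAt K c s1 s2)⁻¹ ^ 2) := by
  rw [derivative_inv', smul_eq_C_mul]
  simp [fAt, xAt, mul_comm]

theorem xAt_mul_inv_fAt_mem (hs1 : s1 ≠ 0) (hf : constantCoeff (fAt K c s1 s2) ≠ 0) :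
    xAt K c * (fAt K c s1 s2)⁻¹ ∈ K[(fAt K c s1 s2)⁻¹] := by
  have hx : xAt K c = C s1⁻¹ * (fAt K c s1 s2 + C (2 * s2)) := by
    rw [fAt, sub_add_cancel, ← mul_assoc, ← map_mul, inv_mul_cancel₀ hs1, map_one, one_mul]
  rw [hx, mul_assoc, add_mul, PowerSeries.mul_inv_cancel _ hf]
  exact mul_mem (Subalgebra.algebraMap_mem _ _) (add_mem (one_mem _)
    (mul_mem (Subalgebra.algebraMap_mem _ _) (Algebra.self_mem_adjoin_singleton K _)))

theorem xAt_mul_C_sub_C : xAt K c * C s1 - C (2 * s2) = fAt K c s1 s2 := by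
  rw [fAt, mul_comm]

theorem A00P1_eq : A00P1 K c s1 s2 = (fAt K c s1 s2)⁻¹ ^ 2 * (C 4⁻¹ *
    (C (-(s1 ^ 2 * s2 ^ 2)) * (fAt K c s1 s2)⁻¹ ^ 2 +
      C (-(s1 ^ 3 * s2) + 8 * s1 * s2 ^ 2) * (xAt K c * (fAt K c s1 s2)⁻¹) * (fAt K c s1 s2)⁻¹ +
      C (2 * s1 ^ 4 - 9 * s1 ^ 2 * s2) * (xAt K c * (fAt K c s1 s2)⁻¹) ^ 2)) := by
  rw [A00P1, xAt_mul_C_sub_C, PowerSeries.mul_inv_rev, PowerSeries.inv_pow, C_inv]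
  ring

theorem A01P1_eq : A01P1 K c s1 s2 = C 2⁻¹ *
    (C (2 * s1 * s2 ^ 2) * (fAt K c s1 s2)⁻¹ ^ 3 +
      C (-(s1 ^ 2 * s2) - 8 * s2 ^ 2) * (xAt K c * (fAt K c s1 s2)⁻¹) * (fAt K c s1 s2)⁻¹ ^ 2 +
      C (-s1 ^ 3 + 10 * s1 * s2) * (xAt K c * (fAt K c s1 s2)⁻¹) ^ 2 * (fAt K c s1 s2)⁻¹ -
      C (s1 ^ 2) * (xAt K c * (fAt K c s1 s2)⁻¹) ^ 3) := by
  rw [A01P1, xAt_mul_C_sub_C, PowerSeries.mul_inv_rev, PowerSeries.inv_pow, C_inv]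
  ring

theorem inv_fAt_mul_A02P1_eq : (fAt K c s1 s2)⁻¹ * A02P1 K c s1 s2 =
    C (s2 ^ 2) * (fAt K c s1 s2)⁻¹ ^ 3 -
      C (2 * (s1 * s2)) * (xAt K c * (fAt K c s1 s2)⁻¹) * (fAt K c s1 s2)⁻¹ ^ 2 +
      C (s1 ^ 2 + s2) * (xAt K c * (fAt K c s1 s2)⁻¹) ^ 2 * (fAt K c s1 s2)⁻¹ -
      C s1 * (xAt K c * (fAt K c s1 s2)⁻¹) ^ 3 := by
  rw [A02P1, xAt_mul_C_sub_C, PowerSeries.inv_pow]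
  ring

end LocalP1

/-- **Admissibility of the local `ℙ¹` differential system.**
Let `K` be a field of characteristic zero, `λ₀, λ₁ ∈ K` nonzero with `λ₀ ≠ λ₁` and
`s₁ = λ₀ + λ₁ ≠ 0`, `s₂ = λ₀λ₁`, `f(x) = s₁x - 2s₂`.  Since `f(λᵢ) ≠ 0`, the ring
`K[x][f⁻¹]` embeds into `K[[x - λᵢ]]`, modelled as `K[[X]]` with `x = λᵢ + X`.  Then for
any sequence `(Φ_p)` in `K[[x - λᵢ]]` with `Φ₀ = 1` satisfying, for all `p ≥ 1`,
`dΦ_p/dx = A₀₀Φ_{p-1} + A₀₁ dΦ_{p-1}/dx + A₀₂ d²Φ_{p-1}/dx²`, every `Φ_p` lies in the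
subring `K[x][(s₁x - 2s₂)⁻¹]` of `K[[x - λᵢ]]`. -/
theorem admissible_system_localP1
    (K : Type*) [Field K] [CharZero K]
    (lam : Fin 2 → K) (hnz : ∀ j, lam j ≠ 0) (hne : lam 0 ≠ lam 1) (i : Fin 2)
    (s1 s2 : K) (hs1 : s1 = lam 0 + lam 1) (hs2 : s2 = lam 0 * lam 1) (hs1ne : s1 ≠ 0)
    (Φ : ℕ → K⟦X⟧) (hΦ0 : Φ 0 = 1)
    (hrec : ∀ p : ℕ,
      PowerSeries.derivative K (Φ (p + 1)) =
        A00P1 K (lam i) s1 s2 * Φ p +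
        A01P1 K (lam i) s1 s2 * PowerSeries.derivative K (Φ p) +
        A02P1 K (lam i) s1 s2 *
          PowerSeries.derivative K (PowerSeries.derivative K (Φ p))) :
    ∀ p : ℕ, Φ p ∈
      Algebra.adjoin K
        {xAt K (lam i),
          (PowerSeries.C (R := K) s1 * xAt K (lam i) - PowerSeries.C (R := K) (2 * s2))⁻¹} := by
  have hf : constantCoeff (fAt K (lam i) s1 s2) ≠ 0 := by
    have hf_lam : ∀ j, (lam 0 + lam 1) * lam j - 2 * (lam 0 * lam 1) ≠ 0 := by
      refine Fin.forall_fin_two.2 ⟨?_, ?_⟩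
      · convert mul_ne_zero (hnz 0) (sub_ne_zero.2 hne) using 1
        ring
      · convert mul_ne_zero (hnz 1) (sub_ne_zero.2 hne.symm) using 1
        ring
    rw [constantCoeff_fAt, hs1, hs2]
    exact hf_lam i
  have hx := xAt_mul_inv_fAt_mem hs1ne hf
  have hv := Algebra.self_mem_adjoin_singleton K (fAt K (lam i) s1 s2)⁻¹
  have hC : ∀ a : K, C a ∈ K[(fAt K (lam i) s1 s2)⁻¹] := Subalgebra.algebraMap_mem _
  intro p
  refine Algebra.adjoin_mono (Set.subset_insert _ _) ?_
  refine mem_adjoin_of_admissible hs1ne derivative_inv_fAt ⟨_, ?_, A00P1_eq⟩ ?_ ?_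
    (hΦ0 ▸ one_mem _) hrec p
  · apply_rules [add_mem, mul_mem, pow_mem]
  · rw [A01P1_eq]
    apply_rules [add_mem, sub_mem, mul_mem, pow_mem]
  · rw [inv_fAt_mul_A02P1_eq]
    apply_rules [add_mem, sub_mem, mul_mem, pow_mem]

end
end
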